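/- arXiv:2307.11888 — 2 statements merged into one kernel-verified Lean document; each statement's English description precedes it below -/
import Mathlib

section
/- Let M, L ≥ 1 and set N = M·L. There exist a diagonal matrix Λ ∈ ℂ^{N×N} and a matrix B ∈ ℂ^{N×M} such that, for the linear RNN x₀ = 0, x_k = Λ x_{k−1} + B v_k processing inputs v₁, …, v_L ∈ ℝ^M, the following holds for every k ∈ {1, …, L}: the map (v₁, …, v_k) ↦ x_k from (ℝ^M)^k to ℂ^N is injective and admits a linear left inverse, i.e. there exists a linear map Ω_k : ℂ^N → (ℂ^M)^k with Ω_k x_k = (v₁, …, v_k) for all inputs. In particular, with hidden dimension N = ML (scaling with the product of input dimension and sequence length) the linear RNN incurs no information loss: every prefix (v₁, …, v_k) can be perfectly recovered from x_k. -/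
open Matrix BigOperators

/-- Hidden states of a linear diagonal RNN with eigenvalues `lam`, input matrix `B`,
and (complex-valued) `M`-dimensional input sequence `v` (the input at step `k ≥ 1` is `v k`):
`x 0 = 0`, `x (k+1) = Λ x k + B v (k+1)`. -/
noncomputable def rnnStateM {N M : ℕ} (lam : Fin N → ℂ) (B : Matrix (Fin N) (Fin M) ℂ)
    (v : ℕ → Fin M → ℂ) : ℕ → Fin N → ℂ
  | 0 => 0
  | k + 1 => fun i => lam i * rnnStateM lam B v k i + B.mulVec (v (k + 1)) i

/-- A real input prefix `v₁, …, v_k ∈ ℝ^M` (zero-based `v : Fin k → Fin M → ℝ`),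
viewed as a `ℕ`-indexed complex vector sequence whose value at time `m ∈ {1, …, k}` is `v_m`. -/
noncomputable def seqInputM {k M : ℕ} (v : Fin k → Fin M → ℝ) : ℕ → Fin M → ℂ :=
  fun m => if h : m - 1 < k then (fun i => ((v ⟨m - 1, h⟩ i : ℝ) : ℂ)) else 0

/-- Eigenvalues: block `(i, l)` gets eigenvalue `l`. -/
noncomputable def myLam (M L : ℕ) : Fin (M * L) → ℂ :=
  fun p => (((finProdFinEquiv.symm p).2 : ℕ) : ℂ)

/-- Input matrix: routes input coordinate `i` to all rows in block `i`. -/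
noncomputable def myB (M L : ℕ) : Matrix (Fin (M * L)) (Fin M) ℂ :=
  fun p q => if (finProdFinEquiv.symm p).1 = q then 1 else 0

lemma myB_mulVec (M L : ℕ) (u : Fin M → ℂ) (p : Fin (M * L)) :
    (myB M L).mulVec u p = u ((finProdFinEquiv.symm p).1) := by
  simp [myB, Matrix.mulVec, dotProduct, ite_mul]

/-- Closed formula for the RNN state. -/
lemma rnn_formula {N M : ℕ} (lam : Fin N → ℂ) (B : Matrix (Fin N) (Fin M) ℂ)
    (v : ℕ → Fin M → ℂ) : ∀ (k : ℕ) (i : Fin N),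
    rnnStateM lam B v k i = ∑ j ∈ Finset.range k, lam i ^ j * B.mulVec (v (k - j)) i := by
  intro k
  induction k with
  | zero => intro i; simp [rnnStateM]
  | succ k ih =>
      intro i
      rw [show rnnStateM lam B v (k + 1) i
          = lam i * rnnStateM lam B v k i + B.mulVec (v (k + 1)) i from rfl, ih i,
        Finset.sum_range_succ']
      rw [Finset.mul_sum]
      simp only [pow_succ, pow_zero, one_mul, Nat.add_sub_cancel]
      congr 1
      · apply Finset.sum_congr rfl
        intro j hj
        have : k + 1 - (j + 1) = k - j := by omega
        rw [this]; ring

/-- The (complex-linear) map `(v₁,…,v_k) ↦ x_k`. -/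
noncomputable def Fmap (M L k : ℕ) : (Fin k → Fin M → ℂ) →ₗ[ℂ] (Fin (M * L) → ℂ) where
  toFun w := fun p => ∑ j : Fin k, myLam M L p ^ (j : ℕ) * w j.rev ((finProdFinEquiv.symm p).1)
  map_add' w w' := by
    funext p
    simp [mul_add, Finset.sum_add_distrib]
  map_smul' a w := by
    funext p
    simp [Finset.mul_sum]
    apply Finset.sum_congr rfl
    intro j _
    ring

lemma rnn_eq_Fmap (M L k : ℕ) (w : Fin k → Fin M → ℂ) :
    rnnStateM (myLam M L) (myB M L)
      (fun m => if h : m - 1 < k then w ⟨m - 1, h⟩ else 0) k = Fmap M L k w := by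
  funext p
  rw [rnn_formula]
  show _ = ∑ j : Fin k, myLam M L p ^ (j : ℕ) * w j.rev ((finProdFinEquiv.symm p).1)
  rw [← Fin.sum_univ_eq_sum_range
    (fun j => myLam M L p ^ j *
      (myB M L).mulVec (if h : k - j - 1 < k then w ⟨k - j - 1, h⟩ else 0) p) k]
  apply Finset.sum_congr rfl
  intro j _
  rw [myB_mulVec]
  have h1 : k - (j : ℕ) - 1 < k := by omega
  rw [dif_pos h1]
  have h2 : (⟨k - (j : ℕ) - 1, h1⟩ : Fin k) = j.rev :=
    Fin.ext (by simp [Fin.val_rev]; omega)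
  rw [h2]

lemma Fmap_inj (M L k : ℕ) (hk : k ≤ L) : Function.Injective (Fmap M L k) := by
  rw [← LinearMap.ker_eq_bot, LinearMap.ker_eq_bot']
  intro w hw
  have key : ∀ (i : Fin M) (c : Fin k → ℂ), (c = fun j => w j.rev i) → c = 0 := by
    intro i c hc
    apply Matrix.eq_zero_of_forall_index_sum_pow_mul_eq_zero
      (f := fun l : Fin k => ((l : ℕ) : ℂ))
    · intro a b hab
      have : (a : ℕ) = (b : ℕ) := Nat.cast_injective hab
      exact Fin.ext this
    · intro l
      have hl := congrFun hw (finProdFinEquiv (i, Fin.castLE hk l))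
      simp only [Fmap, LinearMap.coe_mk, AddHom.coe_mk, Pi.zero_apply,
        Equiv.symm_apply_apply, myLam] at hl
      rw [hc]
      simpa using hl
  funext j i
  have := congrFun (key i (fun j => w j.rev i) rfl) j.rev
  simpa using this

/-- For `M, L ≥ 1` and hidden dimension `N = M·L`, there exist a diagonal
matrix `Λ = diag(lam) ∈ ℂ^{N×N}` and `B ∈ ℂ^{N×M}` such that for every `k ∈ {1, …, L}`
the map `(v₁, …, v_k) ↦ x_k` is injective and admits a linear left inverse `Ω_k`:
the linear RNN incurs no information loss. -/
theorem linear_rnn_multidim_perfect_memory (M L : ℕ) (hM : 1 ≤ M) (hL : 1 ≤ L) :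
    ∃ (lam : Fin (M * L) → ℂ) (B : Matrix (Fin (M * L)) (Fin M) ℂ),
      ∀ k : ℕ, 1 ≤ k → k ≤ L →
        Function.Injective
          (fun v : Fin k → Fin M → ℝ => rnnStateM lam B (seqInputM v) k)
        ∧
        (∃ Ω : (Fin (M * L) → ℂ) →ₗ[ℂ] (Fin k → Fin M → ℂ),
          ∀ v : Fin k → Fin M → ℝ,
            Ω (rnnStateM lam B (seqInputM v) k) = fun j i => ((v j i : ℝ) : ℂ)) := by
  refine ⟨myLam M L, myB M L, ?_⟩
  intro k hk1 hkL
  have key : ∀ v : Fin k → Fin M → ℝ,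
      rnnStateM (myLam M L) (myB M L) (seqInputM v) k
        = Fmap M L k (fun j i => ((v j i : ℝ) : ℂ)) := by
    intro v
    rw [← rnn_eq_Fmap M L k (fun j i => ((v j i : ℝ) : ℂ))]
    rfl
  have hinj := Fmap_inj M L k hkL
  constructor
  · intro v v' h
    simp only [key] at h
    have h2 := hinj h
    funext j i
    have := congrFun (congrFun h2 j) i
    exact_mod_cast this
  · obtain ⟨Ω, hΩ⟩ := (Fmap M L k).exists_leftInverse_of_injective
      (LinearMap.ker_eq_bot.mpr hinj)
    refine ⟨Ω, fun v => ?_⟩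
    rw [key v]
    exact LinearMap.congr_fun hΩ _
end

section
/- (Combination of Barron Maps.) Let h : ℝ → ℝ be an infinitely differentiable function whose support is contained in [−1, 1] and with h(0) = 1; let ℋ be its Fourier transform and set C_h := ∫_ℝ |ν||ℋ(ν)| dν and C′_h := ∫_ℝ |ℋ(ν)| dν (both finite). Let L ≥ 1 and, for each k ∈ {1, …, L}, let f_k : ℝ^n → ℝ be continuous and integrable with integrable Fourier transform ℱ_k, Barron constant C_{f_k} := ∫_{ℝ^n} ‖w‖₂ |ℱ_k(w)| dw < ∞ and Fourier norm C′_{f_k} := ∫_{ℝ^n} |ℱ_k(w)| dw < ∞. Define f̃ : ℝ^{n+1} → ℝ by f̃(x, t) = Σ_{k=1}^L f_k(x) h(t − k). Then: (i) f̃ extends the family, i.e. f̃(x, k) = f_k(x) for every x ∈ ℝ^n and every integer k ∈ {1, …, L}; (ii) f̃ is integrable; and (iii) the Barron constant of f̃ satisfies C_{f̃} := ∫_{ℝ^{n+1}} ‖ω‖₂ |ℱ̃(ω)| dω ≤ Σ_{k=1}^L (C′_h · C_{f_k} + C_h · C′_{f_k}). -/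
open MeasureTheory BigOperators
open scoped ENNReal NNReal

/-- The Fourier transform `ℱ(ω) = ∫ f(x) e^{-i⟨ω,x⟩} dx` of `f : ℝ^n → ℝ`. -/
noncomputable def ftransform {n : ℕ} (f : EuclideanSpace ℝ (Fin n) → ℝ)
    (ω : EuclideanSpace ℝ (Fin n)) : ℂ :=
  ∫ x : EuclideanSpace ℝ (Fin n), (f x : ℂ) * Complex.exp (-(Complex.I * ((inner ℝ ω x : ℝ) : ℂ)))

/-- The Fourier transform `ℋ(ν) = ∫ h(t) e^{-iνt} dt` of `h : ℝ → ℝ`. -/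
noncomputable def ftransform1 (h : ℝ → ℝ) (ν : ℝ) : ℂ :=
  ∫ t : ℝ, (h t : ℂ) * Complex.exp (-(Complex.I * ((ν * t : ℝ) : ℂ)))

/-- The first `n` coordinates of a point of `ℝ^{n+1}`, as a point of `ℝ^n`. -/
noncomputable def initPt {n : ℕ} (p : EuclideanSpace ℝ (Fin (n + 1))) :
    EuclideanSpace ℝ (Fin n) :=
  (EuclideanSpace.equiv (Fin n) ℝ).symm fun i => p i.castSucc

/-- The point `(x, t) ∈ ℝ^{n+1}` built from `x ∈ ℝ^n` and `t ∈ ℝ`. -/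
noncomputable def snocPt {n : ℕ} (x : EuclideanSpace ℝ (Fin n)) (t : ℝ) :
    EuclideanSpace ℝ (Fin (n + 1)) :=
  (EuclideanSpace.equiv (Fin (n + 1)) ℝ).symm (Fin.snoc (EuclideanSpace.equiv (Fin n) ℝ x) t)

/-- The interpolation `f̃(x, t) = Σ_{k=1}^L f_k(x) h(t - k)` of the family `(f_k)` via the
filter `h`, as a function on `ℝ^{n+1}` (last coordinate is time). -/
noncomputable def ftilde {n L : ℕ} (f : Fin L → EuclideanSpace ℝ (Fin n) → ℝ) (h : ℝ → ℝ)
    (p : EuclideanSpace ℝ (Fin (n + 1))) : ℝ :=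
  ∑ k : Fin L, f k (initPt p) * h (p (Fin.last n) - ((k : ℕ) + 1))

noncomputable def prodEquiv (n : ℕ) :
    EuclideanSpace ℝ (Fin (n+1)) ≃ᵐ (EuclideanSpace ℝ (Fin n)) × ℝ :=
  (MeasurableEquiv.toLp 2 (Fin (n+1) → ℝ)).symm.trans <|
    (MeasurableEquiv.piFinSuccAbove (fun _ => ℝ) (Fin.last n)).trans <|
      (MeasurableEquiv.prodComm ..).trans <|
        MeasurableEquiv.prodCongr (MeasurableEquiv.toLp 2 (Fin n → ℝ))
          (MeasurableEquiv.refl ℝ)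

lemma prodEquiv_apply {n : ℕ} (p : EuclideanSpace ℝ (Fin (n+1))) :
    prodEquiv n p = (initPt p, p (Fin.last n)) := by
  simp only [prodEquiv, MeasurableEquiv.trans_apply, MeasurableEquiv.prodComm,
    MeasurableEquiv.prodCongr, MeasurableEquiv.piFinSuccAbove]
  ext <;> simp [initPt, Fin.succAbove_last, MeasurableEquiv.coe_toLp, Fin.init]

lemma measurePreserving_prodEquiv (n : ℕ) :
    MeasurePreserving (prodEquiv n) volume volume := by
  have h1 := EuclideanSpace.volume_preserving_symm_measurableEquiv_toLp (Fin (n+1))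
  have h2 := volume_preserving_piFinSuccAbove (fun _ : Fin (n+1) => ℝ) (Fin.last n)
  have h4 := (EuclideanSpace.volume_preserving_symm_measurableEquiv_toLp (Fin n)).symm
  have h3 : MeasurePreserving (MeasurableEquiv.prodComm (α := ℝ) (β := Fin n → ℝ)) volume volume := by
    rw [Measure.volume_eq_prod, Measure.volume_eq_prod]; exact Measure.measurePreserving_swap
  have h4' : MeasurePreserving
      (MeasurableEquiv.prodCongr (MeasurableEquiv.toLp 2 (Fin n → ℝ))
        (MeasurableEquiv.refl ℝ)) volume volume := by
    rw [Measure.volume_eq_prod, Measure.volume_eq_prod]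
    exact h4.prod (MeasurePreserving.id _)
  exact h4'.comp (h3.comp (h2.comp h1))

lemma initPt_snocPt {n : ℕ} (x : EuclideanSpace ℝ (Fin n)) (t : ℝ) :
    initPt (snocPt x t) = x := by
  ext i
  simp [initPt, snocPt, Fin.snoc_castSucc]

lemma snocPt_last {n : ℕ} (x : EuclideanSpace ℝ (Fin n)) (t : ℝ) :
    snocPt x t (Fin.last n) = t := by
  simp [snocPt]

lemma prodEquiv_symm {n : ℕ} (x : EuclideanSpace ℝ (Fin n)) (t : ℝ) :
    (prodEquiv n).symm (x, t) = snocPt x t := by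
  have := prodEquiv_apply (snocPt x t)
  rw [initPt_snocPt, snocPt_last] at this
  rw [← this, MeasurableEquiv.symm_apply_apply]

lemma inner_snocPt {n : ℕ} (ω : EuclideanSpace ℝ (Fin (n+1))) (x : EuclideanSpace ℝ (Fin n))
    (t : ℝ) : (inner ℝ ω (snocPt x t) : ℝ) = inner ℝ (initPt ω) x + ω (Fin.last n) * t := by
  simp only [PiLp.inner_apply, RCLike.inner_apply, starRingEnd_apply, star_trivial]
  rw [Fin.sum_univ_castSucc]
  simp [initPt, snocPt, Fin.snoc_castSucc, mul_comm]

lemma norm_le_snoc {n : ℕ} (ω : EuclideanSpace ℝ (Fin (n+1))) :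
    ‖ω‖ ≤ ‖initPt ω‖ + |ω (Fin.last n)| := by
  have h1 : ‖ω‖ = Real.sqrt (‖initPt ω‖ ^ 2 + |ω (Fin.last n)| ^ 2) := by
    rw [EuclideanSpace.norm_eq, EuclideanSpace.norm_eq]
    rw [Real.sq_sqrt (by positivity)]
    congr 1
    rw [Fin.sum_univ_castSucc, sq_abs]
    simp [initPt]
  rw [h1]
  have h2 : ‖initPt ω‖ ^ 2 + |ω (Fin.last n)| ^ 2 ≤ (‖initPt ω‖ + |ω (Fin.last n)|) ^ 2 := by
    nlinarith [norm_nonneg (initPt ω), abs_nonneg (ω (Fin.last n))]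
  calc Real.sqrt (‖initPt ω‖ ^ 2 + |ω (Fin.last n)| ^ 2)
      ≤ Real.sqrt ((‖initPt ω‖ + |ω (Fin.last n)|) ^ 2) := Real.sqrt_le_sqrt h2
    _ = ‖initPt ω‖ + |ω (Fin.last n)| := Real.sqrt_sq (by positivity)

lemma h_vanish {h : ℝ → ℝ} (hc : Continuous h)
    (hsupp : Function.support h ⊆ Set.Icc (-1 : ℝ) 1) {r : ℝ} (hr : 1 ≤ |r|) : h r = 0 := by
  have hout : ∀ s : ℝ, 1 < |s| → h s = 0 := by
    intro s hs
    by_contra hne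
    have := hsupp hne
    rw [Set.mem_Icc] at this
    exact absurd (abs_le.mpr this) (not_le.mpr hs)
  rcases eq_or_lt_of_le hr with heq | hlt
  · have h1 : Set.EqOn h (fun _ => (0:ℝ)) {s : ℝ | 1 < |s|} := fun s hs => hout s hs
    have h2 : Set.EqOn h (fun _ => (0:ℝ)) (closure {s : ℝ | 1 < |s|}) :=
      h1.closure hc continuous_const
    have h3 : r ∈ closure {s : ℝ | 1 < |s|} := by
      rcases abs_eq (by norm_num : (0:ℝ) ≤ 1) |>.mp heq.symm with h4 | h4
      · subst h4
        have : (1:ℝ) ∈ closure (Set.Ioi (1:ℝ)) := by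
          rw [closure_Ioi]; exact Set.self_mem_Ici
        apply closure_mono (fun s (hs : s ∈ Set.Ioi (1:ℝ)) => ?_) this
        simp only [Set.mem_setOf_eq, abs_of_pos (lt_trans one_pos (Set.mem_Ioi.mp hs))]
        exact Set.mem_Ioi.mp hs
      · rw [h4]
        have : (-1:ℝ) ∈ closure (Set.Iio (-1:ℝ)) := by
          rw [closure_Iio]; exact Set.self_mem_Iic
        apply closure_mono (fun s (hs : s ∈ Set.Iio (-1:ℝ)) => ?_) this
        have : |s| = -s := abs_of_neg (by linarith [Set.mem_Iio.mp hs])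
        simp only [Set.mem_setOf_eq, this]
        linarith [Set.mem_Iio.mp hs]
    exact h2 h3
  · exact hout r hlt

lemma part_i {n L : ℕ} {h : ℝ → ℝ} (hc : Continuous h)
    (hsupp : Function.support h ⊆ Set.Icc (-1 : ℝ) 1) (h0 : h 0 = 1)
    (f : Fin L → EuclideanSpace ℝ (Fin n) → ℝ)
    (x : EuclideanSpace ℝ (Fin n)) (k : Fin L) :
    ftilde f h (snocPt x ((k : ℕ) + 1)) = f k x := by
  unfold ftilde
  rw [initPt_snocPt, snocPt_last]
  rw [Finset.sum_eq_single_of_mem k (Finset.mem_univ k)]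
  · simp [h0]
  · intro j _ hjk
    have hne : (j : ℕ) ≠ (k : ℕ) := fun hh => hjk (Fin.ext hh)
    have h1 : (1:ℝ) ≤ |((k:ℕ):ℝ) + 1 - (((j:ℕ):ℝ) + 1)| := by
      have : ((k:ℕ):ℝ) + 1 - (((j:ℕ):ℝ) + 1) = (((k:ℕ):ℤ) - ((j:ℕ):ℤ) : ℤ) := by
        push_cast; ring
      rw [this, ← Int.cast_abs]
      have : (1:ℤ) ≤ |((k:ℕ):ℤ) - ((j:ℕ):ℤ)| := by
        have hne' : ((k:ℕ):ℤ) - ((j:ℕ):ℤ) ≠ 0 := by omega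
        exact Int.one_le_abs hne'
      exact_mod_cast this
    rw [h_vanish hc hsupp h1, mul_zero]

lemma norm_exp_neg_I_mul (r : ℝ) : ‖Complex.exp (-(Complex.I * (r : ℂ)))‖ = 1 := by
  rw [Complex.norm_exp]
  simp

lemma ftilde_snocPt {n L : ℕ} (f : Fin L → EuclideanSpace ℝ (Fin n) → ℝ) (h : ℝ → ℝ)
    (x : EuclideanSpace ℝ (Fin n)) (t : ℝ) :
    ftilde f h (snocPt x t) = ∑ k : Fin L, f k x * h (t - ((k : ℕ) + 1)) := by
  unfold ftilde
  rw [initPt_snocPt, snocPt_last]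

lemma h_integrable {h : ℝ → ℝ} (hc : Continuous h)
    (hsupp : Function.support h ⊆ Set.Icc (-1 : ℝ) 1) : Integrable h :=
  hc.integrable_of_hasCompactSupport
    (IsCompact.of_isClosed_subset isCompact_Icc isClosed_closure
      (closure_minimal hsupp isClosed_Icc))

lemma fourier_shift (h : ℝ → ℝ) (c ν : ℝ) :
    (∫ t : ℝ, (h (t - c) : ℂ) * Complex.exp (-(Complex.I * ((ν * t : ℝ) : ℂ))))
      = Complex.exp (-(Complex.I * ((ν * c : ℝ) : ℂ))) * ftransform1 h ν := by
  rw [← integral_add_right_eq_self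
    (fun t : ℝ => (h (t - c) : ℂ) * Complex.exp (-(Complex.I * ((ν * t : ℝ) : ℂ)))) c]
  unfold ftransform1
  rw [← integral_const_mul]
  congr 1
  ext s
  rw [add_sub_cancel_right]
  rw [mul_comm (Complex.exp _) _, mul_assoc, ← Complex.exp_add]
  congr 2
  push_cast
  ring

lemma ftransform_ftilde {n L : ℕ} {h : ℝ → ℝ} (hc : Continuous h)
    (hsupp : Function.support h ⊆ Set.Icc (-1 : ℝ) 1)
    (f : Fin L → EuclideanSpace ℝ (Fin n) → ℝ)
    (hfc : ∀ k, Continuous (f k)) (hfi : ∀ k, Integrable (f k))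
    (ω : EuclideanSpace ℝ (Fin (n + 1))) :
    ftransform (ftilde f h) ω = ∑ k : Fin L,
      ftransform (f k) (initPt ω) *
        (Complex.exp (-(Complex.I * ((ω (Fin.last n) * ((k : ℕ) + 1) : ℝ) : ℂ))) *
          ftransform1 h (ω (Fin.last n))) := by
  have hint : Integrable h := h_integrable hc hsupp
  set ν := ω (Fin.last n) with hν
  have FkInt : ∀ k : Fin L, Integrable (fun x : EuclideanSpace ℝ (Fin n) =>
      (f k x : ℂ) * Complex.exp (-(Complex.I * ((inner ℝ (initPt ω) x : ℝ) : ℂ)))) := by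
    intro k
    apply (hfi k).norm.mono'
    · apply Continuous.aestronglyMeasurable
      exact (Complex.continuous_ofReal.comp (hfc k)).mul
        (Complex.continuous_exp.comp ((continuous_const.mul
          (Complex.continuous_ofReal.comp (continuous_const.inner continuous_id))).neg))
    · filter_upwards with x
      rw [norm_mul, norm_exp_neg_I_mul, mul_one, Complex.norm_real]
  have GkInt : ∀ k : Fin L, Integrable (fun t : ℝ =>
      (h (t - ((k : ℕ) + 1)) : ℂ) * Complex.exp (-(Complex.I * ((ν * t : ℝ) : ℂ)))) := by
    intro k
    apply (hint.comp_sub_right ((k : ℕ) + 1 : ℝ)).norm.mono'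
    · apply Continuous.aestronglyMeasurable
      exact (Complex.continuous_ofReal.comp (hc.comp (continuous_id.sub continuous_const))).mul
        (Complex.continuous_exp.comp ((continuous_const.mul
          (Complex.continuous_ofReal.comp (continuous_const.mul continuous_id))).neg))
    · filter_upwards with t
      rw [norm_mul, norm_exp_neg_I_mul, mul_one, Complex.norm_real]
  have key : ∀ z : EuclideanSpace ℝ (Fin n) × ℝ,
      (ftilde f h ((prodEquiv n).symm z) : ℂ) *
        Complex.exp (-(Complex.I * ((inner ℝ ω ((prodEquiv n).symm z) : ℝ) : ℂ)))
      = ∑ k : Fin L,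
          (((f k z.1 : ℂ) * Complex.exp (-(Complex.I * ((inner ℝ (initPt ω) z.1 : ℝ) : ℂ)))) *
           ((h (z.2 - ((k : ℕ) + 1)) : ℂ) *
             Complex.exp (-(Complex.I * ((ν * z.2 : ℝ) : ℂ))))) := by
    intro z
    rw [show (prodEquiv n).symm z = snocPt z.1 z.2 from by rw [← prodEquiv_symm]]
    rw [ftilde_snocPt, inner_snocPt, ← hν]
    rw [Complex.ofReal_add, mul_add, neg_add, Complex.exp_add]
    push_cast
    rw [Finset.sum_mul]
    exact Finset.sum_congr rfl fun k _ => by ring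
  unfold ftransform
  rw [← ((measurePreserving_prodEquiv n).symm).integral_comp
    (MeasurableEquiv.measurableEmbedding _)]
  simp_rw [key]
  rw [Measure.volume_eq_prod]
  rw [integral_finset_sum _ (fun k _ => ((FkInt k).mul_prod (GkInt k)))]
  refine Finset.sum_congr rfl fun k _ => ?_
  rw [integral_prod_mul (fun x : EuclideanSpace ℝ (Fin n) =>
      (f k x : ℂ) * Complex.exp (-(Complex.I * ((inner ℝ (initPt ω) x : ℝ) : ℂ))))
    (fun t : ℝ => (h (t - ((k : ℕ) + 1)) : ℂ) *
      Complex.exp (-(Complex.I * ((ν * t : ℝ) : ℂ))))]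
  rw [fourier_shift h ((k : ℕ) + 1 : ℝ) ν]

lemma part_ii {n L : ℕ} {h : ℝ → ℝ} (hc : Continuous h)
    (hsupp : Function.support h ⊆ Set.Icc (-1 : ℝ) 1)
    (f : Fin L → EuclideanSpace ℝ (Fin n) → ℝ) (hfi : ∀ k, Integrable (f k)) :
    Integrable (ftilde f h) := by
  have hint := h_integrable hc hsupp
  rw [← ((measurePreserving_prodEquiv n).symm).integrable_comp_emb
    (MeasurableEquiv.measurableEmbedding _)]
  have heq : (ftilde f h ∘ (prodEquiv n).symm) = fun z : EuclideanSpace ℝ (Fin n) × ℝ =>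
      ∑ k : Fin L, f k z.1 * h (z.2 - ((k : ℕ) + 1)) := by
    funext z
    simp only [Function.comp]
    rw [show (prodEquiv n).symm z = snocPt z.1 z.2 from by rw [← prodEquiv_symm], ftilde_snocPt]
  rw [heq, Measure.volume_eq_prod]
  exact integrable_finset_sum _ fun k _ => (hfi k).mul_prod (hint.comp_sub_right _)

lemma ftransform1_sm {h : ℝ → ℝ} (hc : Continuous h) :
    MeasureTheory.StronglyMeasurable (ftransform1 h) := by
  apply MeasureTheory.StronglyMeasurable.integral_prod_right'
    (f := fun p : ℝ × ℝ => (h p.2 : ℂ) * Complex.exp (-(Complex.I * ((p.1 * p.2 : ℝ) : ℂ))))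
  apply Continuous.stronglyMeasurable
  exact (Complex.continuous_ofReal.comp (hc.comp continuous_snd)).mul
    (Complex.continuous_exp.comp ((continuous_const.mul
      (Complex.continuous_ofReal.comp (continuous_fst.mul continuous_snd))).neg))

lemma nnnorm_exp_neg_I_mul (r : ℝ) : ‖Complex.exp (-(Complex.I * (r : ℂ)))‖₊ = 1 :=
  NNReal.coe_injective (by rw [coe_nnnorm, norm_exp_neg_I_mul, NNReal.coe_one])

lemma part_iii {n L : ℕ} {h : ℝ → ℝ} (hc : Continuous h)
    (hsupp : Function.support h ⊆ Set.Icc (-1 : ℝ) 1)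
    (f : Fin L → EuclideanSpace ℝ (Fin n) → ℝ)
    (hfc : ∀ k, Continuous (f k)) (hfi : ∀ k, Integrable (f k))
    (hFi : ∀ k, Integrable (ftransform (f k))) :
    (∫⁻ ω : EuclideanSpace ℝ (Fin (n + 1)),
        (‖ω‖₊ : ℝ≥0∞) * ‖ftransform (ftilde f h) ω‖₊)
      ≤ ∑ k : Fin L,
          ((∫⁻ ν : ℝ, (‖ftransform1 h ν‖₊ : ℝ≥0∞))
              * (∫⁻ w : EuclideanSpace ℝ (Fin n), (‖w‖₊ : ℝ≥0∞) * ‖ftransform (f k) w‖₊)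
            + (∫⁻ ν : ℝ, (‖ν‖₊ : ℝ≥0∞) * ‖ftransform1 h ν‖₊)
              * (∫⁻ w : EuclideanSpace ℝ (Fin n), (‖ftransform (f k) w‖₊ : ℝ≥0∞))) := by
  have hmap : (volume : Measure (EuclideanSpace ℝ (Fin (n + 1)))) =
      Measure.map (prodEquiv n).symm volume :=
    ((measurePreserving_prodEquiv n).symm).map_eq.symm
  rw [hmap, lintegral_map_equiv, Measure.volume_eq_prod]
  -- pointwise bound
  have key : ∀ z : EuclideanSpace ℝ (Fin n) × ℝ,
      (‖(prodEquiv n).symm z‖₊ : ℝ≥0∞) * ‖ftransform (ftilde f h) ((prodEquiv n).symm z)‖₊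
      ≤ ∑ k : Fin L, ((‖z.1‖₊ * ‖ftransform (f k) z.1‖₊ : ℝ≥0∞) * ‖ftransform1 h z.2‖₊
          + (‖ftransform (f k) z.1‖₊ : ℝ≥0∞) * (‖z.2‖₊ * ‖ftransform1 h z.2‖₊)) := by
    intro z
    have hz : (prodEquiv n).symm z = snocPt z.1 z.2 := by rw [← prodEquiv_symm]
    rw [hz]
    have hA : (‖snocPt z.1 z.2‖₊ : ℝ≥0∞) ≤ (‖z.1‖₊ : ℝ≥0∞) + ‖z.2‖₊ := by
      have h1 := norm_le_snoc (snocPt z.1 z.2)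
      rw [initPt_snocPt, snocPt_last] at h1
      have h2 : ‖snocPt z.1 z.2‖₊ ≤ ‖z.1‖₊ + ‖z.2‖₊ := by
        rw [← NNReal.coe_le_coe]
        push_cast [coe_nnnorm]
        simpa [Real.norm_eq_abs] using h1
      exact_mod_cast h2
    have hB : (‖ftransform (ftilde f h) (snocPt z.1 z.2)‖₊ : ℝ≥0∞) ≤
        ∑ k : Fin L, (‖ftransform (f k) z.1‖₊ : ℝ≥0∞) * ‖ftransform1 h z.2‖₊ := by
      rw [ftransform_ftilde hc hsupp f hfc hfi, initPt_snocPt, snocPt_last]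
      calc (‖∑ k : Fin L, ftransform (f k) z.1 *
              (Complex.exp (-(Complex.I * ((z.2 * ((k : ℕ) + 1) : ℝ) : ℂ))) *
                ftransform1 h z.2)‖₊ : ℝ≥0∞)
          ≤ ∑ k : Fin L, (‖ftransform (f k) z.1 *
              (Complex.exp (-(Complex.I * ((z.2 * ((k : ℕ) + 1) : ℝ) : ℂ))) *
                ftransform1 h z.2)‖₊ : ℝ≥0∞) := by
            rw [← ENNReal.coe_finset_sum]
            exact ENNReal.coe_le_coe.mpr (nnnorm_sum_le _ _)
        _ = ∑ k : Fin L, (‖ftransform (f k) z.1‖₊ : ℝ≥0∞) * ‖ftransform1 h z.2‖₊ := by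
            refine Finset.sum_congr rfl fun k _ => ?_
            rw [nnnorm_mul, nnnorm_mul, nnnorm_exp_neg_I_mul, one_mul, ENNReal.coe_mul]
    calc (‖snocPt z.1 z.2‖₊ : ℝ≥0∞) * ‖ftransform (ftilde f h) (snocPt z.1 z.2)‖₊
        ≤ ((‖z.1‖₊ : ℝ≥0∞) + ‖z.2‖₊) *
            ∑ k : Fin L, (‖ftransform (f k) z.1‖₊ : ℝ≥0∞) * ‖ftransform1 h z.2‖₊ :=
          mul_le_mul' hA hB
      _ = _ := by
          rw [Finset.mul_sum]
          exact Finset.sum_congr rfl fun k _ => by ring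
  refine le_trans (lintegral_mono key) ?_
  -- measurability pieces
  have hHm : Measurable (fun t : ℝ => (‖ftransform1 h t‖₊ : ℝ≥0∞)) :=
    (ftransform1_sm hc).measurable.enorm
  have hFm : ∀ k : Fin L, AEMeasurable
      (fun x : EuclideanSpace ℝ (Fin n) => (‖ftransform (f k) x‖₊ : ℝ≥0∞)) volume :=
    fun k => (hFi k).aestronglyMeasurable.enorm
  have hak : ∀ k : Fin L, AEMeasurable
      (fun x : EuclideanSpace ℝ (Fin n) => (‖x‖₊ : ℝ≥0∞) * ‖ftransform (f k) x‖₊) volume :=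
    fun k => measurable_nnnorm.coe_nnreal_ennreal.aemeasurable.mul (hFm k)
  have hd : Measurable (fun t : ℝ => (‖t‖₊ : ℝ≥0∞) * ‖ftransform1 h t‖₊) :=
    measurable_nnnorm.coe_nnreal_ennreal.mul hHm
  have hterm : ∀ k : Fin L, AEMeasurable (fun z : EuclideanSpace ℝ (Fin n) × ℝ =>
      ((‖z.1‖₊ * ‖ftransform (f k) z.1‖₊ : ℝ≥0∞) * ‖ftransform1 h z.2‖₊
        + (‖ftransform (f k) z.1‖₊ : ℝ≥0∞) * (‖z.2‖₊ * ‖ftransform1 h z.2‖₊)))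
      (volume.prod volume) := by
    intro k
    have h1 : AEMeasurable (fun z : EuclideanSpace ℝ (Fin n) × ℝ =>
        ((‖z.1‖₊ : ℝ≥0∞) * ‖ftransform (f k) z.1‖₊)) (volume.prod volume) := by
      have := (hak k).comp_quasiMeasurePreserving
        (Measure.quasiMeasurePreserving_fst (μ := (volume : Measure (EuclideanSpace ℝ (Fin n))))
          (ν := (volume : Measure ℝ)))
      exact this
    have h2 : AEMeasurable (fun z : EuclideanSpace ℝ (Fin n) × ℝ =>
        (‖ftransform (f k) z.1‖₊ : ℝ≥0∞)) (volume.prod volume) :=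
      (hFm k).comp_quasiMeasurePreserving Measure.quasiMeasurePreserving_fst
    have h3 : AEMeasurable (fun z : EuclideanSpace ℝ (Fin n) × ℝ =>
        (‖ftransform1 h z.2‖₊ : ℝ≥0∞)) (volume.prod volume) :=
      (hHm.comp measurable_snd).aemeasurable
    have h4 : AEMeasurable (fun z : EuclideanSpace ℝ (Fin n) × ℝ =>
        (‖z.2‖₊ : ℝ≥0∞) * ‖ftransform1 h z.2‖₊) (volume.prod volume) :=
      (hd.comp measurable_snd).aemeasurable
    exact ((h1.mul h3).add (h2.mul h4))
  rw [lintegral_finset_sum' _ (fun k _ => hterm k)]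
  refine Finset.sum_le_sum fun k _ => ?_
  have h1 : AEMeasurable (fun z : EuclideanSpace ℝ (Fin n) × ℝ =>
      ((‖z.1‖₊ * ‖ftransform (f k) z.1‖₊ : ℝ≥0∞) * ‖ftransform1 h z.2‖₊)) (volume.prod volume) := by
    have := ((hak k).comp_quasiMeasurePreserving
      (Measure.quasiMeasurePreserving_fst (μ := (volume : Measure (EuclideanSpace ℝ (Fin n))))
        (ν := (volume : Measure ℝ)))).mul ((hHm.comp measurable_snd).aemeasurable)
    exact this
  rw [lintegral_add_left' h1]
  apply add_le_add
  · rw [lintegral_prod_mul (f := fun x : EuclideanSpace ℝ (Fin n) =>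
        (‖x‖₊ : ℝ≥0∞) * ‖ftransform (f k) x‖₊)
      (g := fun t : ℝ => (‖ftransform1 h t‖₊ : ℝ≥0∞)) (hak k) hHm.aemeasurable]
    rw [mul_comm]
  · rw [lintegral_prod_mul (f := fun x : EuclideanSpace ℝ (Fin n) =>
        (‖ftransform (f k) x‖₊ : ℝ≥0∞))
      (g := fun t : ℝ => (‖t‖₊ : ℝ≥0∞) * ‖ftransform1 h t‖₊) (hFm k) hd.aemeasurable]
    rw [mul_comm]

/-- Combination of Barron maps. Let `h : ℝ → ℝ` be smooth, supported in
`[-1,1]`, with `h 0 = 1`, and let `f_1, …, f_L : ℝ^n → ℝ` be continuous and integrable with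
integrable Fourier transforms and finite Barron constants. Then
`f̃(x,t) = Σ_{k=1}^L f_k(x) h(t-k)` (i) extends the family: `f̃(x,k) = f_k(x)` for integer
`k ∈ {1,…,L}`; (ii) is integrable; and (iii) has Barron constant at most
`Σ_{k=1}^L (C′_h C_{f_k} + C_h C′_{f_k})`. -/
theorem combination_of_barron_maps {n L : ℕ} (hL : 1 ≤ L)
    (h : ℝ → ℝ) (hsmooth : ContDiff ℝ (⊤ : ℕ∞) h)
    (hsupp : Function.support h ⊆ Set.Icc (-1 : ℝ) 1) (h0 : h 0 = 1)
    (f : Fin L → EuclideanSpace ℝ (Fin n) → ℝ)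
    (hfc : ∀ k, Continuous (f k)) (hfi : ∀ k, Integrable (f k))
    (hFi : ∀ k, Integrable (ftransform (f k)))
    (hCf : ∀ k, (∫⁻ w : EuclideanSpace ℝ (Fin n),
        (‖w‖₊ : ℝ≥0∞) * ‖ftransform (f k) w‖₊) < ⊤) :
    -- (i) extension property at integer times k ∈ {1, …, L}
    (∀ (x : EuclideanSpace ℝ (Fin n)) (k : Fin L),
        ftilde f h (snocPt x ((k : ℕ) + 1)) = f k x)
    ∧
    -- (ii) integrability of f̃
    Integrable (ftilde f h)
    ∧
    -- (iii) Barron constant bound: C_{f̃} ≤ Σ_k (C′_h C_{f_k} + C_h C′_{f_k})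
    (∫⁻ ω : EuclideanSpace ℝ (Fin (n + 1)),
        (‖ω‖₊ : ℝ≥0∞) * ‖ftransform (ftilde f h) ω‖₊)
      ≤ ∑ k : Fin L,
          ((∫⁻ ν : ℝ, (‖ftransform1 h ν‖₊ : ℝ≥0∞))
              * (∫⁻ w : EuclideanSpace ℝ (Fin n), (‖w‖₊ : ℝ≥0∞) * ‖ftransform (f k) w‖₊)
            + (∫⁻ ν : ℝ, (‖ν‖₊ : ℝ≥0∞) * ‖ftransform1 h ν‖₊)
              * (∫⁻ w : EuclideanSpace ℝ (Fin n), (‖ftransform (f k) w‖₊ : ℝ≥0∞))) := by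
  have hc : Continuous h := hsmooth.continuous
  exact ⟨fun x k => part_i hc hsupp h0 f x k, part_ii hc hsupp f hfi,
    part_iii hc hsupp f hfc hfi hFi⟩
end
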